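/- In the abstract framework with a fixed computable enumeration g : Ω → D of all of D (where Ω represents the relevant time), every semidecidable class is computably enumerable; conversely, if D itself is computably enumerable then every semidecidable class with a computable surjection from D onto it is computably enumerable. Hence 'D is computably enumerable' is equivalent to 'every semidecidable class is computably enumerable'. -/

import Mathlib

/-! If `h` enumerates all of `D` from `Ω`, then composing it with a computable surjection
`f` onto a semidecidable class `A` enumerates `A` from `Ω`, since
`(f ∘ h)[Ω] = f[h[Ω]] = f[D] = ran f = A`. The converse is the special case `A = D`. -/

namespace PFun

variable {α β γ : Type*}

theorem image_comp (f : β →. γ) (g : α →. β) (s : Set α) :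
    (f.comp g).image s = f.image (g.image s) := by
  ext c
  simp only [mem_image, comp_apply, Part.mem_bind_iff (g := (f : β → Part γ))]
  constructor
  · rintro ⟨a, ha, b, hb, hc⟩
    exact ⟨b, ⟨a, ha, hb⟩, hc⟩
  · rintro ⟨b, ⟨a, ha, hb⟩, hc⟩
    exact ⟨a, ha, b, hb, hc⟩

theorem image_univ (f : α →. β) : f.image Set.univ = f.ran := by
  ext b
  simp [mem_image, ran]

end PFun

/-- Abstract form of Proposition 12. `C` is the class of computable partial functions
on `D`, closed under composition; `Ω ⊆ D` represents the relevant time, and a class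
`A` is computably enumerable if `A = {h(w) : w ∈ Ω}` for some `h ∈ C`. Assume that
every semidecidable class is the range of a computable function, and that `D` itself
is semidecidable. Then `D` is computably enumerable if and only if every
semidecidable class is computably enumerable. -/
theorem D_ce_iff_every_semidecidable_ce {D : Type*}
    (C : Set (D →. D)) (Ω : Set D) (zero : D)
    (hcomp : ∀ f ∈ C, ∀ g ∈ C, f.comp g ∈ C)
    (hrange : ∀ A : Set D,
      ((fun w => Part.assert (w ∈ A) fun _ => Part.some zero : D →. D) ∈ C) →
      ∃ f ∈ C, PFun.ran f = A)
    (hDsemi :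
      ((fun w => Part.assert (w ∈ (Set.univ : Set D)) fun _ => Part.some zero : D →. D) ∈ C)) :
    (∃ h ∈ C, PFun.image h Ω = Set.univ) ↔
      ∀ A : Set D,
        ((fun w => Part.assert (w ∈ A) fun _ => Part.some zero : D →. D) ∈ C) →
        ∃ h ∈ C, PFun.image h Ω = A := by
  refine ⟨?_, fun hce => hce Set.univ hDsemi⟩
  rintro ⟨h, hC, hsurj⟩ A hA
  obtain ⟨f, fC, rfl⟩ := hrange A hA
  exact ⟨f.comp h, hcomp f fC h hC, by rw [PFun.image_comp, hsurj, PFun.image_univ]⟩
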